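/- Given transitive unimodal permutations δ_1 ∈ Δ_k and δ_2 ∈ Δ_ℓ with peaks m_1, m_2, there exists exactly one subset J ⊆ {1,...,k+ℓ} with |J| = k such that δ_1 ⊕_J δ_2 is unimodal and Ω_J(m_1) < Ω̄_J(m_2). -/

import Mathlib

/-- `δ` is unimodal with peak `m`: strictly increasing on `{0,...,m}` and
strictly decreasing on `{m,...,n-1}`. -/
def IsUnimodalPeak {n : ℕ} (δ : Equiv.Perm (Fin n)) (m : Fin n) : Prop :=
  (∀ a b : Fin n, a < b → b ≤ m → δ a < δ b) ∧
  (∀ a b : Fin n, m ≤ a → a < b → δ b < δ a)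

/-- A permutation of `Fin n` is unimodal if it has a peak. -/
def IsUnimodal {n : ℕ} (δ : Equiv.Perm (Fin n)) : Prop :=
  ∃ m, IsUnimodalPeak δ m

/-- A permutation is transitive (a single `n`-cycle) if every point can be
mapped to every other point by iteration. -/
def IsTransitive {n : ℕ} (δ : Equiv.Perm (Fin n)) : Prop :=
  ∀ x y : Fin n, ∃ i : ℕ, (δ ^ i) x = y

/-- The unique increasing map `Ω_J` from `Fin k` onto the subset `J` of size `k`. -/
def omegaMap {n k : ℕ} (J : Finset (Fin n)) (h : J.card = k) : Fin k → Fin n :=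
  fun a => (J.orderIsoOfFin h a : Fin n)

/-!
Give each block a side, `x ≤ m₁` for `δ₁` and `y < m₂` for `δ₂`, and compare points by their
itineraries in the kneading order, in which every step on the decreasing branch reverses the
comparison of what follows. For a unimodal permutation this order is monotone in the position,
and for transitive `δ₁, δ₂` no point of one block has the itinerary of a point of the other.
So any admissible `J` must interleave the blocks exactly as the itineraries do, which determines
`J`; conversely, for that interleaving `δ₁ ⊕_J δ₂` is increasing on the points of the first
sides and decreasing on the others, hence unimodal.
-/

open scoped Finset

namespace Kneading

theorem toLex_lt_of_head_lt {β : Type*} [LT β] {u v : ℕ → β} (h : u 0 < v 0) :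
    toLex u < toLex v :=
  ⟨0, fun _ hj => absurd hj (Nat.not_lt_zero _), h⟩

theorem toLex_lt_toLex_iff_tail {β : Type*} [Preorder β] {u v : ℕ → β} (h : u 0 = v 0) :
    toLex u < toLex v ↔ toLex (fun i => u (i + 1)) < toLex (fun i => v (i + 1)) := by
  constructor
  · rintro ⟨_ | i, hlt, hi⟩
    · exact absurd hi (by simp [h])
    · exact ⟨i, fun j hj => hlt (j + 1) (by omega), hi⟩
  · rintro ⟨i, hlt, hi⟩
    refine ⟨i + 1, fun j hj => ?_, hi⟩
    rcases j with _ | j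
    · exact h
    · exact hlt j (by omega)

theorem toLex_not_lt_toLex_not {u v : ℕ → Bool} :
    toLex (fun i => !u i) < toLex (fun i => !v i) ↔ toLex v < toLex u := by
  have not_lt_not : ∀ a b : Bool, (!a) < (!b) ↔ b < a := by decide
  constructor <;> rintro ⟨i, hlt, hi⟩
  · exact ⟨i, fun j hj => (Bool.not_inj (hlt j hj)).symm, (not_lt_not _ _).1 hi⟩
  · exact ⟨i, fun j hj => congrArg (!·) (hlt j hj).symm, (not_lt_not _ _).2 hi⟩

/-- `twist u i` is `!u i`, flipped once more for every `false` among `u 0, …, u (i-1)`.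
The lexicographic order on twisted sequences is the kneading order on itineraries:
at the first difference, `true` comes first iff an even number of `false`s (steps
on the decreasing branch) precede it. -/
def twist : (ℕ → Bool) → ℕ → Bool
  | u, 0 => !u 0
  | u, i + 1 => xor (!u 0) (twist (fun j => u (j + 1)) i)

theorem twist_tail_of_head_true {u : ℕ → Bool} (hu : u 0 = true) :
    (fun i => twist u (i + 1)) = twist (fun j => u (j + 1)) := by
  funext i; simp [twist, hu]

theorem twist_tail_of_head_false {u : ℕ → Bool} (hu : u 0 = false) :
    (fun i => twist u (i + 1)) = fun i => !twist (fun j => u (j + 1)) i := by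
  funext i; simp [twist, hu]

theorem twist_injective : Function.Injective twist := by
  suffices ∀ i (u v : ℕ → Bool), twist u = twist v → u i = v i from
    fun u v h => funext fun i => this i u v h
  intro i
  induction i with
  | zero => intro u v h; simpa [twist] using congrFun h 0
  | succ i ih =>
    intro u v h
    have h0 : u 0 = v 0 := by simpa [twist] using congrFun h 0
    refine ih (fun j => u (j + 1)) (fun j => v (j + 1)) (funext fun j => ?_)
    have := congrFun h (j + 1)
    simp only [twist, h0] at this
    simpa using this

variable {α β : Type*}

def itinerary (σ : Equiv.Perm α) (s : α → Bool) (x : α) : ℕ → Bool :=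
  fun i => s ((σ ^ i) x)

def itinKey (σ : Equiv.Perm α) (s : α → Bool) (x : α) : Lex (ℕ → Bool) :=
  toLex (twist (itinerary σ s x))

section Itinerary

variable {σ : Equiv.Perm α} {s : α → Bool} {τ : Equiv.Perm β} {t : β → Bool} {x : α} {y : β}

theorem itinerary_succ (i : ℕ) : itinerary σ s x (i + 1) = itinerary σ s (σ x) i := by
  simp [itinerary, pow_succ]

theorem itinerary_pow_apply (i j : ℕ) :
    itinerary σ s ((σ ^ j) x) i = itinerary σ s x (i + j) := by
  simp [itinerary, pow_add]

theorem itinKey_comp {W : α → β} (hW : ∀ x, τ (W x) = W (σ x)) (x : α) :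
    itinKey τ t (W x) = itinKey σ (t ∘ W) x := by
  have : ∀ i, (τ ^ i) (W x) = W ((σ ^ i) x) := by
    intro i
    induction i with
    | zero => rfl
    | succ i ih => simp [pow_succ', ih, hW]
  unfold itinKey itinerary
  simp only [this, Function.comp_apply]

theorem itinKey_eq_itinKey_iff :
    itinKey σ s x = itinKey τ t y ↔ itinerary σ s x = itinerary τ t y :=
  toLex_inj.trans twist_injective.eq_iff

theorem itinKey_lt_of_true_of_false (hx : s x = true) (hy : t y = false) :
    itinKey σ s x < itinKey τ t y :=
  toLex_lt_of_head_lt (by simp [twist, itinerary, hx, hy])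

theorem side_le_side_of_itinKey_lt (h : itinKey σ s x < itinKey τ t y) : t y ≤ s x := by
  by_contra hc
  obtain ⟨hx, hy⟩ := Bool.lt_iff.1 (not_le.1 hc)
  exact h.not_gt (itinKey_lt_of_true_of_false hy hx)

theorem itinKey_lt_iff_of_true (hx : s x = true) (hy : t y = true) :
    itinKey σ s x < itinKey τ t y ↔ itinKey σ s (σ x) < itinKey τ t (τ y) := by
  rw [itinKey, itinKey, toLex_lt_toLex_iff_tail (by simp [twist, itinerary, hx, hy]),
    twist_tail_of_head_true hx, twist_tail_of_head_true hy]
  simp only [itinerary_succ]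
  rfl

theorem itinKey_lt_iff_of_false (hx : s x = false) (hy : t y = false) :
    itinKey σ s x < itinKey τ t y ↔ itinKey τ t (τ y) < itinKey σ s (σ x) := by
  rw [itinKey, itinKey, toLex_lt_toLex_iff_tail (by simp [twist, itinerary, hx, hy]),
    twist_tail_of_head_false hx, twist_tail_of_head_false hy, toLex_not_lt_toLex_not]
  simp only [itinerary_succ]
  rfl

end Itinerary

structure GoodSide [LinearOrder α] (δ : Equiv.Perm α) (s : α → Bool) : Prop where
  antitone : Antitone s
  strictMonoOn : StrictMonoOn δ {x | s x = true}
  strictAntiOn : StrictAntiOn δ {x | s x = false}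

namespace GoodSide

variable [LinearOrder α] {δ : Equiv.Perm α} {s : α → Bool}

theorem side_true_of_le (h : GoodSide δ s) {x y : α} (hxy : x ≤ y) (hy : s y = true) :
    s x = true :=
  Bool.eq_true_of_true_le (hy ▸ h.antitone hxy)

theorem side_false_of_le (h : GoodSide δ s) {x y : α} (hxy : x ≤ y) (hx : s x = false) :
    s y = false :=
  Bool.eq_false_of_le_false (hx ▸ h.antitone hxy)

theorem monotone_itinKey (h : GoodSide δ s) : Monotone (itinKey δ s) := by
  have of_side_ne : ∀ {x y}, x < y → s x ≠ s y → itinKey δ s x ≤ itinKey δ s y := by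
    intro x y hxy hne
    cases hy : s y
    · exact (itinKey_lt_of_true_of_false (by simpa [hy] using hne) hy).le
    · exact absurd (h.side_true_of_le hxy.le hy) (hy ▸ hne)
  have key : ∀ d x y, x < y → itinerary δ s x d ≠ itinerary δ s y d →
      itinKey δ s x ≤ itinKey δ s y := by
    intro d
    induction d with
    | zero => exact fun x y hxy hd => of_side_ne hxy hd
    | succ d ih =>
      intro x y hxy hd
      rw [itinerary_succ, itinerary_succ] at hd
      by_cases hne : s x = s y
      · cases hx : s x
        · have hy : s y = false := hne ▸ hx
          have := ih _ _ (h.strictAntiOn hx hy hxy) (Ne.symm hd)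
          exact not_lt.1 ((itinKey_lt_iff_of_false hy hx).not.2 (not_lt.2 this))
        · have hy : s y = true := hne ▸ hx
          have := ih _ _ (h.strictMonoOn hx hy hxy) hd
          exact not_lt.1 ((itinKey_lt_iff_of_true hy hx).not.2 (not_lt.2 this))
      · exact of_side_ne hxy hne
  intro x y hxy
  by_cases heq : itinerary δ s x = itinerary δ s y
  · exact (itinKey_eq_itinKey_iff.2 heq).le
  · obtain ⟨d, hd⟩ := Function.ne_iff.1 heq
    exact key d x y (hxy.lt_of_ne (by rintro rfl; exact heq rfl)) hd

end GoodSide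

end Kneading

open Kneading

namespace IsUnimodalPeak

variable {n : ℕ} {δ : Equiv.Perm (Fin n)} {m : Fin n}

theorem le_apply_peak (h : IsUnimodalPeak δ m) (x : Fin n) : x ≤ δ m := by
  obtain ⟨y, rfl⟩ := δ.surjective x
  rcases lt_trichotomy y m with hy | rfl | hy
  · exact (h.1 y m hy le_rfl).le
  · exact le_rfl
  · exact (h.2 m y le_rfl hy).le

theorem eq_of_apply_peak_le (h : IsUnimodalPeak δ m) {x : Fin n} (hx : δ m ≤ δ x) : x = m :=
  δ.injective (le_antisymm (h.le_apply_peak _) hx)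

theorem goodSide_le (h : IsUnimodalPeak δ m) : GoodSide δ (fun x => decide (x ≤ m)) where
  antitone x y hxy := by
    simp only [Bool.le_iff_imp, decide_eq_true_eq]
    exact hxy.trans
  strictMonoOn x _ y hy hxy := h.1 x y hxy (by simpa using hy)
  strictAntiOn x hx y _ hxy := h.2 x y (by simpa using hx : m < x).le hxy

theorem goodSide_lt (h : IsUnimodalPeak δ m) : GoodSide δ (fun x => decide (x < m)) where
  antitone x y hxy := by
    simp only [Bool.le_iff_imp, decide_eq_true_eq]
    exact hxy.trans_lt
  strictMonoOn x _ y hy hxy := h.1 x y hxy (by simpa using hy : y < m).le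
  strictAntiOn x hx y _ hxy := h.2 x y (by simpa using hx) hxy

end IsUnimodalPeak

theorem Kneading.GoodSide.isUnimodalPeak {n : ℕ} {δ : Equiv.Perm (Fin n)} {s : Fin n → Bool}
    (h : GoodSide δ s) {m : Fin n} (hm : ∀ x, δ x ≤ δ m) : IsUnimodalPeak δ m := by
  refine ⟨fun a b hab hbm => ?_, fun a b hma hab => ?_⟩
  · rcases hbm.eq_or_lt with rfl | hbm
    · exact (hm a).lt_of_ne (δ.injective.ne hab.ne)
    have hb : s b = true := by
      by_contra hb
      have hb : s b = false := by simpa using hb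
      exact absurd (h.strictAntiOn hb (h.side_false_of_le hbm.le hb) hbm) (not_lt.2 (hm b))
    exact h.strictMonoOn (h.side_true_of_le hab.le hb) hb hab
  · rcases hma.eq_or_lt with rfl | hma
    · exact (hm b).lt_of_ne (δ.injective.ne hab.ne')
    have ha : s a = false := by
      by_contra ha
      have ha : s a = true := by simpa using ha
      exact absurd (h.strictMonoOn (h.side_true_of_le hma.le ha) ha hma) (not_lt.2 (hm a))
    exact h.strictAntiOn ha (h.side_false_of_le hab.le ha) hab

section OmegaMap

variable {n k l : ℕ} {J : Finset (Fin n)}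

theorem omegaMap_eq_orderEmbOfFin (J : Finset (Fin n)) (h : J.card = k) :
    omegaMap J h = J.orderEmbOfFin h :=
  funext fun a => Finset.coe_orderIsoOfFin_apply J h a

theorem omegaMap_strictMono (J : Finset (Fin n)) (h : J.card = k) :
    StrictMono (omegaMap J h) := by
  rw [omegaMap_eq_orderEmbOfFin]
  exact (J.orderEmbOfFin h).strictMono

theorem omegaMap_mem (J : Finset (Fin n)) (h : J.card = k) (a : Fin k) : omegaMap J h a ∈ J :=
  (J.orderIsoOfFin h a).2

theorem image_omegaMap (J : Finset (Fin n)) (h : J.card = k) :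
    Finset.univ.image (omegaMap J h) = J := by
  rw [omegaMap_eq_orderEmbOfFin, ← Finset.coe_inj, Finset.coe_image, Finset.coe_univ,
    Set.image_univ, Finset.range_orderEmbOfFin]

theorem omegaMap_eq_of_strictMono (h : J.card = k) {W : Fin k → Fin n} (hW : StrictMono W)
    (hmem : ∀ a, W a ∈ J) : omegaMap J h = W := by
  rw [omegaMap_eq_orderEmbOfFin]
  exact (Finset.orderEmbOfFin_unique h hmem hW).symm

theorem exists_omegaMap_eq (h : J.card = k) {x : Fin n} (hx : x ∈ J) :
    ∃ a, omegaMap J h a = x := by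
  rw [← image_omegaMap J h] at hx
  simpa using hx

theorem exists_omegaMap_eq_or (hJ : J.card = k) (hJc : Jᶜ.card = l) (x : Fin n) :
    (∃ a, omegaMap J hJ a = x) ∨ ∃ b, omegaMap Jᶜ hJc b = x := by
  by_cases hx : x ∈ J
  · exact Or.inl (exists_omegaMap_eq hJ hx)
  · exact Or.inr (exists_omegaMap_eq hJc (Finset.mem_compl.2 hx))

theorem omegaMap_ne_omegaMap_compl (hJ : J.card = k) (hJc : Jᶜ.card = l) (a : Fin k)
    (b : Fin l) : omegaMap J hJ a ≠ omegaMap Jᶜ hJc b := fun he =>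
  Finset.mem_compl.1 (omegaMap_mem Jᶜ hJc b) (he ▸ omegaMap_mem J hJ a)

theorem val_omegaMap (hJ : J.card = k) (hJc : Jᶜ.card = l) (a : Fin k) :
    (omegaMap J hJ a : ℕ) = a + #{b | omegaMap Jᶜ hJc b < omegaMap J hJ a} := by
  set x := omegaMap J hJ a
  have hin : (Finset.Iio x).filter (· ∈ J) = (Finset.Iio a).image (omegaMap J hJ) := by
    ext p
    simp only [Finset.mem_filter, Finset.mem_Iio, Finset.mem_image]
    constructor
    · rintro ⟨hpx, hpJ⟩
      obtain ⟨a', rfl⟩ := exists_omegaMap_eq hJ hpJ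
      exact ⟨a', (omegaMap_strictMono J hJ).lt_iff_lt.1 hpx, rfl⟩
    · rintro ⟨a', ha', rfl⟩
      exact ⟨omegaMap_strictMono J hJ ha', omegaMap_mem J hJ a'⟩
  have hout : (Finset.Iio x).filter (· ∉ J) =
      (Finset.univ.filter fun b => omegaMap Jᶜ hJc b < x).image (omegaMap Jᶜ hJc) := by
    ext p
    simp only [Finset.mem_filter, Finset.mem_Iio, Finset.mem_image, Finset.mem_univ, true_and]
    constructor
    · rintro ⟨hpx, hpJ⟩
      obtain ⟨b, rfl⟩ := exists_omegaMap_eq hJc (Finset.mem_compl.2 hpJ)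
      exact ⟨b, hpx, rfl⟩
    · rintro ⟨b, hb, rfl⟩
      exact ⟨hb, Finset.mem_compl.1 (omegaMap_mem Jᶜ hJc b)⟩
  rw [← Fin.card_Iio x, ← Finset.card_filter_add_card_filter_not (· ∈ J), hin, hout,
    Finset.card_image_of_injective _ (omegaMap_strictMono J hJ).injective,
    Finset.card_image_of_injective _ (omegaMap_strictMono Jᶜ hJc).injective, Fin.card_Iio]

end OmegaMap

theorem lt_iff_lt_swap {α β : Type*} [LinearOrder α] [LinearOrder β] {x y : α} {u v : β}
    (hxy : x ≠ y) (huv : u ≠ v) (h : x < y ↔ u < v) : y < x ↔ v < u :=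
  lt_iff_lt_of_le_iff_le (by rw [hxy.le_iff_lt, huv.le_iff_lt, h])

section Merge

variable {β : Type*} [LinearOrder β] {k l : ℕ} {f : Fin k → β} {g : Fin l → β}

/-- The position of `a` when the values of `f` and `g` are merged in increasing order. -/
def mergePos (f : Fin k → β) (g : Fin l → β) (a : Fin k) : ℕ :=
  a + #{b | g b < f a}

theorem mergePos_lt_add (a : Fin k) : mergePos f g a < k + l := by
  have := Finset.card_filter_le (Finset.univ : Finset (Fin l)) (fun b => g b < f a)
  simp only [Finset.card_univ, Fintype.card_fin] at this
  simp only [mergePos]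
  omega

theorem mergePos_strictMono (hf : Monotone f) : StrictMono (mergePos f g) := by
  intro a a' h
  have : #{b | g b < f a} ≤ #{b | g b < f a'} := Finset.card_le_card fun b hb => by
    simp only [Finset.mem_filter, Finset.mem_univ, true_and] at hb ⊢
    exact hb.trans_le (hf h.le)
  simp only [mergePos]
  omega

theorem mergePos_lt_mergePos (hf : Monotone f) (hg : Monotone g) {a : Fin k} {b : Fin l}
    (h : f a < g b) : mergePos f g a < mergePos g f b := by
  have hb : #{b' | g b' < f a} ≤ b := by
    rw [← Fin.card_Iio b]
    refine Finset.card_le_card fun b' hb' => ?_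
    simp only [Finset.mem_filter, Finset.mem_univ, true_and] at hb'
    exact Finset.mem_Iio.2 (lt_of_not_ge fun hbb' => (hg hbb').not_gt (hb'.trans h))
  have ha : a + 1 ≤ #{a' | f a' < g b} := by
    rw [← Fin.card_Iic a]
    refine Finset.card_le_card fun a' ha' => ?_
    simp only [Finset.mem_filter, Finset.mem_univ, true_and]
    exact (hf (Finset.mem_Iic.1 ha')).trans_lt h
  simp only [mergePos]
  omega

theorem existsUnique_omegaMap_lt_iff (hf : Monotone f) (hg : Monotone g)
    (hfg : ∀ a b, f a ≠ g b) :
    ∃! J : Finset (Fin (k + l)), ∃ (hJ : J.card = k) (hJc : Jᶜ.card = l),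
      ∀ a b, omegaMap J hJ a < omegaMap Jᶜ hJc b ↔ f a < g b := by
  let P1 : Fin k → Fin (k + l) := fun a => ⟨mergePos f g a, mergePos_lt_add a⟩
  let P2 : Fin l → Fin (k + l) := fun b =>
    ⟨mergePos g f b, (mergePos_lt_add (f := g) (g := f) b).trans_eq (Nat.add_comm l k)⟩
  have hP1 : StrictMono P1 := fun _ _ h => mergePos_strictMono hf h
  have hP2 : StrictMono P2 := fun _ _ h => mergePos_strictMono hg h
  have hlt : ∀ a b, P1 a < P2 b ↔ f a < g b := fun a b =>
    ⟨fun h => (hfg a b).lt_or_gt.resolve_right fun h' =>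
      h.not_gt (mergePos_lt_mergePos hg hf h'), mergePos_lt_mergePos hf hg⟩
  have hP12 : ∀ a b, P1 a ≠ P2 b := fun a b he => by
    rcases lt_or_gt_of_ne (hfg a b) with h | h
    · exact (mergePos_lt_mergePos hf hg h).ne (congrArg Fin.val he)
    · exact (mergePos_lt_mergePos hg hf h).ne (congrArg Fin.val he).symm
  have hJ : (Finset.univ.image P1).card = k := by
    rw [Finset.card_image_of_injective _ hP1.injective, Finset.card_univ, Fintype.card_fin]
  have hJc : (Finset.univ.image P1)ᶜ.card = l := by
    rw [Finset.card_compl, hJ, Fintype.card_fin, Nat.add_sub_cancel_left]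
  refine ⟨Finset.univ.image P1, ⟨hJ, hJc, ?_⟩, ?_⟩
  · rw [omegaMap_eq_of_strictMono hJ hP1 fun a => Finset.mem_image_of_mem _ (Finset.mem_univ a),
      omegaMap_eq_of_strictMono hJc hP2 fun b => by simpa using fun a => hP12 a b]
    exact hlt
  · rintro J ⟨hJ', hJc', hJlt⟩
    have hΩ : omegaMap J hJ' = P1 := by
      funext a
      refine Fin.ext ((val_omegaMap hJ' hJc' a).trans ?_)
      congr 2
      exact Finset.filter_congr fun b _ =>
        lt_iff_lt_swap (omegaMap_ne_omegaMap_compl hJ' hJc' a b) (hfg a b) (hJlt a b)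
    rw [← image_omegaMap J hJ', hΩ]

end Merge

section MergePerm

variable {n k l : ℕ} {J : Finset (Fin n)}

noncomputable def omegaSumEquiv (J : Finset (Fin n)) (hJ : J.card = k) (hJc : Jᶜ.card = l) :
    Fin k ⊕ Fin l ≃ Fin n :=
  Equiv.ofBijective (Sum.elim (omegaMap J hJ) (omegaMap Jᶜ hJc))
    ⟨(omegaMap_strictMono J hJ).injective.sumElim (omegaMap_strictMono Jᶜ hJc).injective
        (omegaMap_ne_omegaMap_compl hJ hJc),
      fun x => (exists_omegaMap_eq_or hJ hJc x).elim (fun ⟨a, ha⟩ => ⟨Sum.inl a, ha⟩)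
        fun ⟨b, hb⟩ => ⟨Sum.inr b, hb⟩⟩

/-- The permutation `δ₁ ⊕_J δ₂`. -/
noncomputable def mergePerm (J : Finset (Fin n)) (hJ : J.card = k) (hJc : Jᶜ.card = l)
    (δ1 : Equiv.Perm (Fin k)) (δ2 : Equiv.Perm (Fin l)) : Equiv.Perm (Fin n) :=
  (omegaSumEquiv J hJ hJc).permCongr (Equiv.sumCongr δ1 δ2)

noncomputable def mergeSide (J : Finset (Fin n)) (hJ : J.card = k) (hJc : Jᶜ.card = l)
    (s1 : Fin k → Bool) (s2 : Fin l → Bool) (x : Fin n) : Bool :=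
  Sum.elim s1 s2 ((omegaSumEquiv J hJ hJc).symm x)

variable (hJ : J.card = k) (hJc : Jᶜ.card = l)

theorem omegaSumEquiv_symm_omegaMap (a : Fin k) :
    (omegaSumEquiv J hJ hJc).symm (omegaMap J hJ a) = Sum.inl a :=
  (omegaSumEquiv J hJ hJc).symm_apply_apply (Sum.inl a)

theorem omegaSumEquiv_symm_omegaMap_compl (b : Fin l) :
    (omegaSumEquiv J hJ hJc).symm (omegaMap Jᶜ hJc b) = Sum.inr b :=
  (omegaSumEquiv J hJ hJc).symm_apply_apply (Sum.inr b)

@[simp]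
theorem mergePerm_omegaMap (δ1 : Equiv.Perm (Fin k)) (δ2 : Equiv.Perm (Fin l)) (a : Fin k) :
    mergePerm J hJ hJc δ1 δ2 (omegaMap J hJ a) = omegaMap J hJ (δ1 a) := by
  rw [mergePerm, Equiv.permCongr_apply, omegaSumEquiv_symm_omegaMap]
  rfl

@[simp]
theorem mergePerm_omegaMap_compl (δ1 : Equiv.Perm (Fin k)) (δ2 : Equiv.Perm (Fin l))
    (b : Fin l) : mergePerm J hJ hJc δ1 δ2 (omegaMap Jᶜ hJc b) = omegaMap Jᶜ hJc (δ2 b) := by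
  rw [mergePerm, Equiv.permCongr_apply, omegaSumEquiv_symm_omegaMap_compl]
  rfl

@[simp]
theorem mergeSide_omegaMap (s1 : Fin k → Bool) (s2 : Fin l → Bool) (a : Fin k) :
    mergeSide J hJ hJc s1 s2 (omegaMap J hJ a) = s1 a := by
  rw [mergeSide, omegaSumEquiv_symm_omegaMap]
  rfl

@[simp]
theorem mergeSide_omegaMap_compl (s1 : Fin k → Bool) (s2 : Fin l → Bool) (b : Fin l) :
    mergeSide J hJ hJc s1 s2 (omegaMap Jᶜ hJc b) = s2 b := by
  rw [mergeSide, omegaSumEquiv_symm_omegaMap_compl]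
  rfl

theorem goodSide_mergePerm {δ1 : Equiv.Perm (Fin k)} {δ2 : Equiv.Perm (Fin l)}
    {s1 : Fin k → Bool} {s2 : Fin l → Bool} (h1 : GoodSide δ1 s1) (h2 : GoodSide δ2 s2)
    (hne : ∀ a b, itinKey δ1 s1 a ≠ itinKey δ2 s2 b)
    (hlt : ∀ a b, omegaMap J hJ a < omegaMap Jᶜ hJc b ↔ itinKey δ1 s1 a < itinKey δ2 s2 b) :
    GoodSide (mergePerm J hJ hJc δ1 δ2) (mergeSide J hJ hJc s1 s2) := by
  have hgt : ∀ a b, omegaMap Jᶜ hJc b < omegaMap J hJ a ↔ itinKey δ2 s2 b < itinKey δ1 s1 a :=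
    fun a b => lt_iff_lt_swap (omegaMap_ne_omegaMap_compl hJ hJc a b) (hne a b) (hlt a b)
  have hΩ := omegaMap_strictMono J hJ
  have hΩc := omegaMap_strictMono Jᶜ hJc
  refine ⟨fun x y hxy => ?_, fun x hx y hy hxy => ?_, fun x hx y hy hxy => ?_⟩ <;>
    rcases exists_omegaMap_eq_or hJ hJc x with ⟨a, rfl⟩ | ⟨b, rfl⟩ <;>
    rcases exists_omegaMap_eq_or hJ hJc y with ⟨a', rfl⟩ | ⟨b', rfl⟩ <;>
    simp only [Set.mem_ofPred_eq, mergeSide_omegaMap, mergeSide_omegaMap_compl,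
      mergePerm_omegaMap, mergePerm_omegaMap_compl] at *
  · exact h1.antitone (hΩ.le_iff_le.1 hxy)
  · exact side_le_side_of_itinKey_lt
      ((hlt _ _).1 (hxy.lt_of_ne (omegaMap_ne_omegaMap_compl hJ hJc _ _)))
  · exact side_le_side_of_itinKey_lt
      ((hgt _ _).1 (hxy.lt_of_ne (omegaMap_ne_omegaMap_compl hJ hJc _ _).symm))
  · exact h2.antitone (hΩc.le_iff_le.1 hxy)
  · exact hΩ.lt_iff_lt.2 (h1.strictMonoOn hx hy (hΩ.lt_iff_lt.1 hxy))
  · exact (hlt _ _).2 ((itinKey_lt_iff_of_true hx hy).1 ((hlt _ _).1 hxy))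
  · exact (hgt _ _).2 ((itinKey_lt_iff_of_true hx hy).1 ((hgt _ _).1 hxy))
  · exact hΩc.lt_iff_lt.2 (h2.strictMonoOn hx hy (hΩc.lt_iff_lt.1 hxy))
  · exact hΩ.lt_iff_lt.2 (h1.strictAntiOn hx hy (hΩ.lt_iff_lt.1 hxy))
  · exact (hgt _ _).2 ((itinKey_lt_iff_of_false hx hy).1 ((hlt _ _).1 hxy))
  · exact (hlt _ _).2 ((itinKey_lt_iff_of_false hx hy).1 ((hgt _ _).1 hxy))
  · exact hΩc.lt_iff_lt.2 (h2.strictAntiOn hx hy (hΩc.lt_iff_lt.1 hxy))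

end MergePerm

section Unimodal

variable {k l : ℕ} {δ1 : Equiv.Perm (Fin k)} {δ2 : Equiv.Perm (Fin l)} {m1 : Fin k} {m2 : Fin l}

/-- The peaks lie on different sides (`≤ m1` versus `< m2`). By transitivity, equal itineraries
would propagate to the images of the two peaks, which carry the largest key of their blocks;
going once around both cycles then compares the sides of `m1` and `m2`. -/
theorem itinKey_ne_itinKey (h1 : IsUnimodalPeak δ1 m1) (h2 : IsUnimodalPeak δ2 m2)
    (ht1 : IsTransitive δ1) (ht2 : IsTransitive δ2) (a : Fin k) (b : Fin l) :
    itinKey δ1 (fun x => decide (x ≤ m1)) a ≠ itinKey δ2 (fun y => decide (y < m2)) b := by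
  set s1 : Fin k → Bool := fun x => decide (x ≤ m1)
  set s2 : Fin l → Bool := fun y => decide (y < m2)
  intro heq
  have hpow : ∀ t, itinKey δ1 s1 ((δ1 ^ t) a) = itinKey δ2 s2 ((δ2 ^ t) b) := fun t =>
    itinKey_eq_itinKey_iff.2 <| funext fun i => by
      rw [itinerary_pow_apply, itinerary_pow_apply, itinKey_eq_itinKey_iff.1 heq]
  obtain ⟨t1, ht1⟩ := ht1 a (δ1 m1)
  obtain ⟨t2, ht2⟩ := ht2 b (δ2 m2)
  have hpeak : itinKey δ1 s1 (δ1 m1) = itinKey δ2 s2 (δ2 m2) := by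
    apply le_antisymm
    · calc itinKey δ1 s1 (δ1 m1) = itinKey δ2 s2 ((δ2 ^ t1) b) := by rw [← ht1, hpow]
        _ ≤ itinKey δ2 s2 (δ2 m2) := h2.goodSide_lt.monotone_itinKey (h2.le_apply_peak _)
    · calc itinKey δ2 s2 (δ2 m2) = itinKey δ1 s1 ((δ1 ^ t2) a) := by rw [← ht2, hpow]
        _ ≤ itinKey δ1 s1 (δ1 m1) := h1.goodSide_le.monotone_itinKey (h1.le_apply_peak _)
  set N := orderOf δ1 * orderOf δ2
  have hN : 0 < N := Nat.mul_pos (orderOf_pos δ1) (orderOf_pos δ2)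
  have h1N : δ1 ^ N = 1 := orderOf_dvd_iff_pow_eq_one.1 (dvd_mul_right _ _)
  have h2N : δ2 ^ N = 1 := orderOf_dvd_iff_pow_eq_one.1 (dvd_mul_left _ _)
  have := congrFun (itinKey_eq_itinKey_iff.1 hpeak) (N - 1)
  rw [← itinerary_succ, ← itinerary_succ, Nat.sub_add_cancel hN] at this
  simp [itinerary, h1N, h2N, s1, s2] at this

/-- The peak of `δ` is `Ω m1` or `Ω̄ m2`; cutting at it with `≤`, resp. `<`, restricts to the
sides of `δ1` and `δ2`. -/
theorem exists_goodSide_of_isUnimodalPeak (h1 : IsUnimodalPeak δ1 m1)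
    (h2 : IsUnimodalPeak δ2 m2) {n : ℕ} {J : Finset (Fin n)} (hJ : J.card = k)
    (hJc : Jᶜ.card = l) {δ : Equiv.Perm (Fin n)}
    (hδ1 : ∀ a, δ (omegaMap J hJ a) = omegaMap J hJ (δ1 a))
    (hδ2 : ∀ b, δ (omegaMap Jᶜ hJc b) = omegaMap Jᶜ hJc (δ2 b)) {m : Fin n}
    (hm : IsUnimodalPeak δ m) (hcond : omegaMap J hJ m1 < omegaMap Jᶜ hJc m2) :
    ∃ s, GoodSide δ s ∧ (∀ a, s (omegaMap J hJ a) = decide (a ≤ m1)) ∧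
      ∀ b, s (omegaMap Jᶜ hJc b) = decide (b < m2) := by
  have hΩ := omegaMap_strictMono J hJ
  have hΩc := omegaMap_strictMono Jᶜ hJc
  rcases exists_omegaMap_eq_or hJ hJc m with ⟨a0, rfl⟩ | ⟨b0, rfl⟩
  · obtain rfl : a0 = m1 := h1.eq_of_apply_peak_le <| hΩ.le_iff_le.1 <| by
      rw [← hδ1, ← hδ1]; exact hm.le_apply_peak _
    refine ⟨fun x => decide (x ≤ omegaMap J hJ a0), hm.goodSide_le,
      fun a => by simp [hΩ.le_iff_le], fun b => decide_eq_decide.2 ⟨fun hb => ?_, fun hb => ?_⟩⟩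
    · exact lt_of_not_ge fun hc => (hcond.trans_le (hΩc.monotone hc)).not_ge hb
    · refine le_of_not_gt fun hc => ?_
      have := hm.2 _ _ hc.le (hΩc hb)
      rw [hδ2, hδ2] at this
      exact (hΩc.lt_iff_lt.1 this).not_ge (h2.le_apply_peak _)
  · obtain rfl : b0 = m2 := h2.eq_of_apply_peak_le <| hΩc.le_iff_le.1 <| by
      rw [← hδ2, ← hδ2]; exact hm.le_apply_peak _
    refine ⟨fun x => decide (x < omegaMap Jᶜ hJc b0), hm.goodSide_lt,
      fun a => decide_eq_decide.2 ⟨fun ha => ?_, fun ha => ?_⟩, fun b => by simp [hΩc.lt_iff_lt]⟩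
    · refine le_of_not_gt fun hc => ?_
      have := hm.1 _ _ (hΩ hc) ha.le
      rw [hδ1, hδ1] at this
      exact (hΩ.lt_iff_lt.1 this).not_ge (h1.le_apply_peak _)
    · exact (hΩ.monotone ha).trans_lt hcond

theorem omegaMap_lt_iff_of_isUnimodal (h1 : IsUnimodalPeak δ1 m1) (h2 : IsUnimodalPeak δ2 m2)
    (ht1 : IsTransitive δ1) (ht2 : IsTransitive δ2) {n : ℕ} {J : Finset (Fin n)}
    (hJ : J.card = k) (hJc : Jᶜ.card = l) {δ : Equiv.Perm (Fin n)}
    (hδ1 : ∀ a, δ (omegaMap J hJ a) = omegaMap J hJ (δ1 a))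
    (hδ2 : ∀ b, δ (omegaMap Jᶜ hJc b) = omegaMap Jᶜ hJc (δ2 b)) (hu : IsUnimodal δ)
    (hcond : omegaMap J hJ m1 < omegaMap Jᶜ hJc m2) (a : Fin k) (b : Fin l) :
    omegaMap J hJ a < omegaMap Jᶜ hJc b ↔
      itinKey δ1 (fun x => decide (x ≤ m1)) a < itinKey δ2 (fun y => decide (y < m2)) b := by
  obtain ⟨m, hm⟩ := hu
  obtain ⟨s, hs, hs1, hs2⟩ := exists_goodSide_of_isUnimodalPeak h1 h2 hJ hJc hδ1 hδ2 hm hcond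
  have hkey1 : itinKey δ s (omegaMap J hJ a) = itinKey δ1 (fun x => decide (x ≤ m1)) a := by
    rw [itinKey_comp hδ1, show s ∘ omegaMap J hJ = _ from funext hs1]
  have hkey2 : itinKey δ s (omegaMap Jᶜ hJc b) = itinKey δ2 (fun y => decide (y < m2)) b := by
    rw [itinKey_comp hδ2, show s ∘ omegaMap Jᶜ hJc = _ from funext hs2]
  constructor
  · intro hab
    have := hs.monotone_itinKey hab.le
    rw [hkey1, hkey2] at this
    exact this.lt_of_ne (itinKey_ne_itinKey h1 h2 ht1 ht2 a b)
  · intro hab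
    exact hs.monotone_itinKey.reflect_lt (by rwa [hkey1, hkey2])

end Unimodal

/-- Theorem 3: for transitive unimodal `δ₁ ∈ Δ_k`, `δ₂ ∈ Δ_ℓ` with peaks
`m₁, m₂`, there is exactly one subset `J ⊆ {1,...,k+ℓ}` of cardinality `k`
such that the intertwined sum `δ₁ ⊕_J δ₂` is unimodal and
`Ω_J(m₁) < Ω̄_J(m₂)`. -/
theorem theorem_three (k l : ℕ) (δ1 : Equiv.Perm (Fin k)) (δ2 : Equiv.Perm (Fin l))
    (m1 : Fin k) (m2 : Fin l)
    (h1 : IsUnimodalPeak δ1 m1) (h2 : IsUnimodalPeak δ2 m2)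
    (ht1 : IsTransitive δ1) (ht2 : IsTransitive δ2) :
    ∃! J : Finset (Fin (k + l)),
      ∃ (hJ : J.card = k) (hJc : Jᶜ.card = l) (δ : Equiv.Perm (Fin (k + l))),
        (∀ a : Fin k, δ (omegaMap J hJ a) = omegaMap J hJ (δ1 a)) ∧
        (∀ b : Fin l, δ (omegaMap Jᶜ hJc b) = omegaMap Jᶜ hJc (δ2 b)) ∧
        IsUnimodal δ ∧ omegaMap J hJ m1 < omegaMap Jᶜ hJc m2 := by
  have hne := itinKey_ne_itinKey h1 h2 ht1 ht2
  obtain ⟨J, ⟨hJ, hJc, hlt⟩, huniq⟩ := existsUnique_omegaMap_lt_iff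
    h1.goodSide_le.monotone_itinKey h2.goodSide_lt.monotone_itinKey hne
  refine ⟨J, ⟨hJ, hJc, mergePerm J hJ hJc δ1 δ2, mergePerm_omegaMap hJ hJc δ1 δ2,
    mergePerm_omegaMap_compl hJ hJc δ1 δ2, ?_, ?_⟩, ?_⟩
  · have : Nonempty (Fin (k + l)) := ⟨Fin.castAdd l m1⟩
    obtain ⟨m, hm⟩ := Finite.exists_max (mergePerm J hJ hJc δ1 δ2)
    exact ⟨m, (goodSide_mergePerm hJ hJc h1.goodSide_le h2.goodSide_lt hne hlt).isUnimodalPeak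
      hm⟩
  · exact (hlt m1 m2).2 (itinKey_lt_of_true_of_false (by simp) (by simp))
  · rintro J' ⟨hJ', hJc', δ, hδ1, hδ2, hu, hcond⟩
    exact huniq J'
      ⟨hJ', hJc', omegaMap_lt_iff_of_isUnimodal h1 h2 ht1 ht2 hJ' hJc' hδ1 hδ2 hu hcond⟩
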